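/- Let (V_a, V_b) be an x-cut partition of a finite conjunction φ of xor-constraints, with φ_a and φ_b the corresponding conjunctions. If φ ∧ l_1 ∧ ... ∧ l_k is satisfiable and logically implies a literal l̂ (a unit constraint y ≡ v), then one of the following holds: (1) φ_a ∧ l_1 ∧ ... ∧ l_k ⊨ l̂ or φ_b ∧ l_1 ∧ ... ∧ l_k ⊨ l̂; (2) for some parity p, φ_a ∧ l_1 ∧ ... ∧ l_k ⊨ (x ≡ p) and φ_b ∧ l_1 ∧ ... ∧ l_k ∧ (x ≡ p) ⊨ l̂; or (3) for some parity p, φ_b ∧ l_1 ∧ ... ∧ l_k ⊨ (x ≡ p) and φ_a ∧ l_1 ∧ ... ∧ l_k ∧ (x ≡ p) ⊨ l̂. -/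

import Mathlib

/-!
Two assignments solving the two sides of an `x0`-cut (each together with the literals) and
agreeing at `x0` glue into a solution of the whole system: take the second one on the
variables of its side and the first one elsewhere. Hence if the side containing `y` does
not imply the literal, a counter-model `a` of it forbids every solution of the other side to
agree with `a` at `x0`, i.e. the other side forces `x0 ≡ a x0 + 1`; gluing with any of its
solutions then shows that the first side together with `x0 ≡ a x0 + 1` implies the literal.
-/

open Finset

section Glue

variable {V ι K : Type*} [Fintype V] [Semiring K]

def IsSolution (C : ι → (V → K) × K) (S : Set ι) (lits : List (V × K)) (x : V → K) : Prop :=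
  (∀ i ∈ S, ∑ v, (C i).1 v * x v = (C i).2) ∧ ∀ l ∈ lits, x l.1 = l.2

def constraintSupport (C : ι → (V → K) × K) (S : Set ι) : Set V :=
  {v | ∃ i ∈ S, (C i).1 v ≠ 0}

theorem sum_mul_congr_of_ne_zero {c x x' : V → K} (h : ∀ v, c v ≠ 0 → x v = x' v) :
    ∑ v, c v * x v = ∑ v, c v * x' v :=
  sum_congr rfl fun v _ => by
    by_cases hc : c v = 0
    · simp only [hc, zero_mul]
    · rw [h v hc]

open Classical in
theorem isSolution_piecewise {C : ι → (V → K) × K} {S T : Set ι} {lits : List (V × K)}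
    {x0 : V} {xa xb : V → K} (hST : ∀ i, i ∈ S ∨ i ∈ T)
    (hcut : constraintSupport C S ∩ constraintSupport C T ⊆ {x0})
    (ha : IsSolution C S lits xa) (hb : IsSolution C T lits xb) (h0 : xa x0 = xb x0) :
    IsSolution C Set.univ lits ((constraintSupport C T).piecewise xb xa) := by
  refine ⟨fun i _ => ?_, fun l hl => ?_⟩
  · rcases hST i with hS | hT
    · refine (sum_mul_congr_of_ne_zero fun v hv => ?_).trans (ha.1 i hS)
      by_cases hvT : v ∈ constraintSupport C T
      · obtain rfl : v = x0 := hcut ⟨⟨i, hS, hv⟩, hvT⟩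
        rw [Set.piecewise_eq_of_mem _ _ _ hvT, h0]
      · exact Set.piecewise_eq_of_notMem _ _ _ hvT
    · refine (sum_mul_congr_of_ne_zero fun v hv => ?_).trans (hb.1 i hT)
      exact Set.piecewise_eq_of_mem _ _ _ ⟨i, hT, hv⟩
  · by_cases hlT : l.1 ∈ constraintSupport C T
    · rw [Set.piecewise_eq_of_mem _ _ _ hlT, hb.2 l hl]
    · rw [Set.piecewise_eq_of_notMem _ _ _ hlT, ha.2 l hl]

end Glue

theorem ZMod.eq_add_one_of_ne : ∀ {a b : ZMod 2}, a ≠ b → a = b + 1 := by decide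

theorem forall_or_forall_not_or_exists_forced_of_glue {α : Type*} {P Q G : α → Prop}
    (f : α → ZMod 2) (hglue : ∀ a b, P a → Q b → f a = f b → G a) :
    (∀ a, P a → G a) ∨ (∀ b, ¬ Q b) ∨
      ∃ p, (∀ b, Q b → f b = p) ∧ ∀ a, P a → f a = p → G a := by
  by_cases hG : ∀ a, P a → G a
  · exact .inl hG
  by_cases hQ : ∀ b, ¬ Q b
  · exact .inr (.inl hQ)
  push Not at hG hQ
  obtain ⟨a, ha, hGa⟩ := hG
  obtain ⟨b, hb⟩ := hQ
  have hforced : ∀ b', Q b' → f b' = f a + 1 := fun b' hb' =>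
    ZMod.eq_add_one_of_ne fun h => hGa (hglue a b' ha hb' h.symm)
  exact .inr (.inr ⟨f a + 1, hforced, fun a' ha' h =>
    hglue a' b ha' hb (h.trans (hforced b hb).symm)⟩)

theorem implied_or_forced_of_cut {V ι : Type*} [Fintype V] {C : ι → (V → ZMod 2) × ZMod 2}
    {S T : Set ι} {lits : List (V × ZMod 2)} {x0 y : V} {w : ZMod 2}
    (hST : ∀ i, i ∈ S ∨ i ∈ T)
    (hcut : constraintSupport C S ∩ constraintSupport C T ⊆ {x0})
    (hy : y ∈ constraintSupport C T → y = x0)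
    (hent : ∀ x, IsSolution C Set.univ lits x → x y = w) :
    (∀ x, IsSolution C S lits x → x y = w) ∨ (∀ x, IsSolution C T lits x → x y = w) ∨
      ∃ p, (∀ x, IsSolution C T lits x → x x0 = p) ∧
        ∀ x, IsSolution C S lits x → x x0 = p → x y = w := by
  classical
  have hglue : ∀ xa xb, IsSolution C S lits xa → IsSolution C T lits xb → xa x0 = xb x0 →
      xa y = w := by
    intro xa xb ha hb h0
    have hglued := hent _ (isSolution_piecewise hST hcut ha hb h0)
    by_cases hyT : y ∈ constraintSupport C T
    · obtain rfl := hy hyT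
      rwa [Set.piecewise_eq_of_mem _ _ _ hyT, ← h0] at hglued
    · rwa [Set.piecewise_eq_of_notMem _ _ _ hyT] at hglued
  rcases forall_or_forall_not_or_exists_forced_of_glue (fun x : V → ZMod 2 => x x0) hglue
    with hS | hT | hforced
  exacts [.inl hS, .inr (.inl fun x hx => (hT x hx).elim), .inr (.inr hforced)]

theorem cut_partition_implied_literal_general {V ι : Type*} [Fintype V]
    (C : ι → (V → ZMod 2) × ZMod 2) (A : Set ι) (x0 : V)
    (hcut : {v | ∃ i ∈ A, (C i).1 v ≠ 0} ∩ {v | ∃ i ∈ Aᶜ, (C i).1 v ≠ 0} = {x0})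
    (lits : List (V × ZMod 2)) (y : V) (w : ZMod 2)
    (hent : ∀ x : V → ZMod 2, (∀ i, ∑ v, (C i).1 v * x v = (C i).2) →
      (∀ l ∈ lits, x l.1 = l.2) → x y = w) :
    ((∀ x : V → ZMod 2, (∀ i ∈ A, ∑ v, (C i).1 v * x v = (C i).2) →
        (∀ l ∈ lits, x l.1 = l.2) → x y = w) ∨
     (∀ x : V → ZMod 2, (∀ i ∈ Aᶜ, ∑ v, (C i).1 v * x v = (C i).2) →
        (∀ l ∈ lits, x l.1 = l.2) → x y = w)) ∨
    (∃ p : ZMod 2,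
      (∀ x : V → ZMod 2, (∀ i ∈ A, ∑ v, (C i).1 v * x v = (C i).2) →
        (∀ l ∈ lits, x l.1 = l.2) → x x0 = p) ∧
      (∀ x : V → ZMod 2, (∀ i ∈ Aᶜ, ∑ v, (C i).1 v * x v = (C i).2) →
        (∀ l ∈ lits, x l.1 = l.2) → x x0 = p → x y = w)) ∨
    (∃ p : ZMod 2,
      (∀ x : V → ZMod 2, (∀ i ∈ Aᶜ, ∑ v, (C i).1 v * x v = (C i).2) →
        (∀ l ∈ lits, x l.1 = l.2) → x x0 = p) ∧
      (∀ x : V → ZMod 2, (∀ i ∈ A, ∑ v, (C i).1 v * x v = (C i).2) →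
        (∀ l ∈ lits, x l.1 = l.2) → x x0 = p → x y = w)) := by
  have hcut' : constraintSupport C A ∩ constraintSupport C Aᶜ ⊆ {x0} := hcut.subset
  have hent' : ∀ x, IsSolution C Set.univ lits x → x y = w :=
    fun x hx => hent x (fun i => hx.1 i trivial) hx.2
  by_cases hyA : y ∈ constraintSupport C A
  · have key := implied_or_forced_of_cut (fun i => em (i ∈ A)) hcut'
      (fun hy => hcut' ⟨hyA, hy⟩) hent'
    simp only [IsSolution, and_imp] at key
    rcases key with hA | hB | ⟨p, hB, hA⟩
    exacts [.inl (.inl hA), .inl (.inr hB), .inr (.inr ⟨p, hB, hA⟩)]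
  · have key := implied_or_forced_of_cut (fun i => (em (i ∈ A)).symm)
      (Set.inter_comm _ _ ▸ hcut') (fun hy => absurd hy hyA) hent'
    simp only [IsSolution, and_imp] at key
    rcases key with hB | hA | ⟨p, hA, hB⟩
    exacts [.inl (.inr hB), .inl (.inl hA), .inr (.inl ⟨p, hA, hB⟩)]

/-- Decomposition theorem, satisfiable case: for an `x0`-cut partition
`(V_a, V_b)` of `φ`, if `φ ∧ l_1 ∧ ... ∧ l_k` is satisfiable and implies the
literal `y ≡ w`, then the literal is implied by one side alone, or one side
implies a value `p` for `x0` and the other side together with `x0 ≡ p` implies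
the literal. -/
theorem cut_partition_implied_literal {V ι : Type*} [Fintype V]
    (C : ι → (V → ZMod 2) × ZMod 2) (A : Set ι) (x0 : V)
    (hcut : {v | ∃ i ∈ A, (C i).1 v ≠ 0} ∩ {v | ∃ i ∈ Aᶜ, (C i).1 v ≠ 0} = {x0})
    (lits : List (V × ZMod 2)) (y : V) (w : ZMod 2)
    (hsat : ∃ x : V → ZMod 2,
      (∀ i, ∑ v, (C i).1 v * x v = (C i).2) ∧ (∀ l ∈ lits, x l.1 = l.2))
    (hent : ∀ x : V → ZMod 2, (∀ i, ∑ v, (C i).1 v * x v = (C i).2) →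
      (∀ l ∈ lits, x l.1 = l.2) → x y = w) :
    ((∀ x : V → ZMod 2, (∀ i ∈ A, ∑ v, (C i).1 v * x v = (C i).2) →
        (∀ l ∈ lits, x l.1 = l.2) → x y = w) ∨
     (∀ x : V → ZMod 2, (∀ i ∈ Aᶜ, ∑ v, (C i).1 v * x v = (C i).2) →
        (∀ l ∈ lits, x l.1 = l.2) → x y = w)) ∨
    (∃ p : ZMod 2,
      (∀ x : V → ZMod 2, (∀ i ∈ A, ∑ v, (C i).1 v * x v = (C i).2) →
        (∀ l ∈ lits, x l.1 = l.2) → x x0 = p) ∧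
      (∀ x : V → ZMod 2, (∀ i ∈ Aᶜ, ∑ v, (C i).1 v * x v = (C i).2) →
        (∀ l ∈ lits, x l.1 = l.2) → x x0 = p → x y = w)) ∨
    (∃ p : ZMod 2,
      (∀ x : V → ZMod 2, (∀ i ∈ Aᶜ, ∑ v, (C i).1 v * x v = (C i).2) →
        (∀ l ∈ lits, x l.1 = l.2) → x x0 = p) ∧
      (∀ x : V → ZMod 2, (∀ i ∈ A, ∑ v, (C i).1 v * x v = (C i).2) →
        (∀ l ∈ lits, x l.1 = l.2) → x x0 = p → x y = w)) :=
  cut_partition_implied_literal_general C A x0 hcut lits y w hent
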